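/- arXiv:0709.3597 — 3 statements merged into one kernel-verified Lean document; each statement's English description precedes it below -/
import Mathlib

section
/- Let h̲ > 0, let S̃ be a subset of the set of finite binary words with #(S̃ ∩ {0,1}^j) ≤ κ̃ 2^j η_{j−1} j² for all j ≥ 1 and some κ̃ ≥ 1, and let h̃ = inf{h > 0 : Σ_j 2^{(1−h̲/h)j} η_j = ∞}. For α > h̲ let L̃_α = {x ∈ T : d(x, x_u) < 2^{−h̲·j(u)/α} for infinitely many u ∈ S̃}. Then for every s > α/h̃ with α < s·h̃, the s-dimensional Hausdorff measure of L̃_α is zero; consequently dim_H L̃_α ≤ α/h̃. -/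
open MeasureTheory
open scoped ENNReal

noncomputable def wordVal (u : List Bool) : ℝ :=
  ∑ k ∈ Finset.range u.length, if u.getD k false then (2:ℝ) ^ (-(k:ℤ) - 1) else 0

noncomputable def wordPt (u : List Bool) : AddCircle (1:ℝ) := ((wordVal u : ℝ) : AddCircle (1:ℝ))

/-- `L̃_α = {x ∈ 𝕋 : d(x, x_u) < 2^{-h̲ j(u)/α} for infinitely many u ∈ S̃}`. -/
def bigL (hlo : ℝ) (S : Set (List Bool)) (α : ℝ) : Set (AddCircle (1:ℝ)) :=
  {x | {u : List Bool | u ∈ S ∧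
    dist x (wordPt u) < (2:ℝ) ^ (-(hlo * u.length) / α)}.Infinite}

open Filter Topology

lemma aux_summable_of_lt (hlo : ℝ) (h0 : 0 < hlo) {h : ℝ} (hh : 0 < h) (hlt : h < hlo)
    (η : ℕ → ℝ) (hη : ∀ j, 0 ≤ η j) (hη1 : ∀ j, η j ≤ 1) :
    Summable fun j : ℕ => (2:ℝ) ^ ((1 - hlo / h) * j) * η j := by
  have hc : (1 : ℝ) - hlo / h < 0 := by
    have : 1 < hlo / h := (one_lt_div hh).2 hlt
    linarith
  have hq1 : (2:ℝ) ^ (1 - hlo/h) < 1 := Real.rpow_lt_one_of_one_lt_of_neg one_lt_two hc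
  have hq0 : (0:ℝ) ≤ (2:ℝ) ^ (1 - hlo/h) := (Real.rpow_pos_of_pos two_pos _).le
  refine Summable.of_nonneg_of_le (fun j => mul_nonneg (Real.rpow_pos_of_pos two_pos _).le (hη j))
    (fun j => ?_) (summable_geometric_of_lt_one hq0 hq1)
  calc (2:ℝ) ^ ((1 - hlo/h) * j) * η j ≤ (2:ℝ) ^ ((1 - hlo/h) * j) * 1 :=
        mul_le_mul_of_nonneg_left (hη1 j) (Real.rpow_pos_of_pos two_pos _).le
    _ = ((2:ℝ) ^ (1 - hlo/h)) ^ j := by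
        rw [mul_one, Real.rpow_mul (by norm_num), Real.rpow_natCast]

lemma aux_summable_mono (hlo : ℝ) (h0 : 0 < hlo) {h h' : ℝ} (hh : 0 < h) (hle : h ≤ h')
    (η : ℕ → ℝ) (hη : ∀ j, 0 ≤ η j)
    (hs : Summable fun j : ℕ => (2:ℝ) ^ ((1 - hlo / h') * j) * η j) :
    Summable fun j : ℕ => (2:ℝ) ^ ((1 - hlo / h) * j) * η j := by
  refine Summable.of_nonneg_of_le (fun j => mul_nonneg (Real.rpow_pos_of_pos two_pos _).le (hη j))
    (fun j => mul_le_mul_of_nonneg_right (Real.rpow_le_rpow_of_exponent_le one_le_two ?_) (hη j)) hs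
  have h1 : hlo / h' ≤ hlo / h := by gcongr
  have h2 : (0:ℝ) ≤ (j:ℝ) := Nat.cast_nonneg j
  nlinarith

set_option maxHeartbeats 1600000 in
lemma aux_core (hlo : ℝ) (h0 : 0 < hlo) (η : ℕ → ℝ) (hη : ∀ j, 0 ≤ η j)
    (κ : ℝ) (hκ : 1 ≤ κ) (St : Set (List Bool))
    (hcard : ∀ j : ℕ, 1 ≤ j → {u ∈ St | u.length = j}.Finite ∧
      ({u ∈ St | u.length = j}.ncard : ℝ) ≤ κ * 2 ^ j * η (j - 1) * (j : ℝ) ^ 2)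
    (α : ℝ) (hα : hlo < α) (s : ℝ) (hs : 0 < s)
    (h : ℝ) (hhs : α / s < h)
    (hsum : Summable fun j : ℕ => (2:ℝ) ^ ((1 - hlo / h) * j) * η j) :
    μH[s] (bigL hlo St α) = 0 := by
  classical
  have hα0 : 0 < α := h0.trans hα
  have hh0 : 0 < h := (div_pos hα0 hs).trans hhs
  set c : ℝ := 1 - hlo * s / α with hc_def
  set c' : ℝ := 1 - hlo / h with hc'_def
  have hcc' : c < c' := by
    have : hlo / h < hlo * s / α := by
      rw [div_lt_div_iff₀ hh0 hα0]
      nlinarith [(div_lt_iff₀ hs).1 hhs]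
    simp only [hc_def, hc'_def]; linarith
  set ρ : ℕ → ℝ := fun j => (2:ℝ) ^ (-(hlo * (j:ℝ)) / α) with hρ_def
  have hρ_pos : ∀ j, 0 < ρ j := fun j => Real.rpow_pos_of_pos two_pos _
  set D : ℕ → ℝ := fun j => κ * 2 ^ j * η (j - 1) * (j:ℝ)^2 * (2 * ρ j)^s with hD_def
  have hD0 : ∀ j, 0 ≤ D j := by
    intro j
    have h1 := hη (j - 1)
    have h2 := (hρ_pos j).le
    have : (0:ℝ) ≤ (2 * ρ j) ^ s := Real.rpow_nonneg (by linarith) s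
    positivity
  -- exponential identity
  have hexp : ∀ j : ℕ, (2:ℝ) ^ j * (2 * ρ j)^s = 2^s * (2:ℝ)^(c * (j:ℝ)) := by
    intro j
    have e1 : ((2:ℝ)^(-(hlo*(j:ℝ))/α))^s = (2:ℝ)^((-(hlo*(j:ℝ))/α) * s) :=
      (Real.rpow_mul (by norm_num) _ _).symm
    rw [hρ_def]
    rw [Real.mul_rpow (by norm_num) (Real.rpow_pos_of_pos two_pos _).le, e1,
      ← Real.rpow_natCast (2:ℝ) j, mul_left_comm, ← Real.rpow_add two_pos]
    have e2 : (j:ℝ) + -(hlo*(j:ℝ))/α * s = c * j := by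
      rw [hc_def]; field_simp; ring
    rw [e2]
  have hkey : ∀ j : ℕ, D j = (κ * (j:ℝ)^2 * η (j-1)) * (2^s * (2:ℝ)^(c * (j:ℝ))) := by
    intro j
    simp only [hD_def]
    rw [← hexp j]; ring
  have hsumD : Summable D := by
    rw [← summable_nat_add_iff 1]
    set q : ℝ := (2:ℝ) ^ (c - c') with hq_def
    have hq0 : 0 < q := Real.rpow_pos_of_pos two_pos _
    have hq1 : q < 1 := Real.rpow_lt_one_of_one_lt_of_neg one_lt_two (by linarith)
    have hqne : q ≠ 0 := ne_of_gt hq0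
    have hφs : Summable (fun m : ℕ => ((m:ℝ)+1)^2 * q ^ m) := by
      have h1 : Summable (fun n : ℕ => (n:ℝ)^2 * q^n) :=
        summable_pow_mul_geometric_of_norm_lt_one 2
          (by rw [Real.norm_eq_abs, abs_of_pos hq0]; exact hq1)
      have h2 := (summable_nat_add_iff 1).2 h1
      have h3 := h2.mul_left q⁻¹
      refine h3.congr fun m => ?_
      push_cast
      rw [pow_succ]
      field_simp
      ring
    obtain ⟨M, hM⟩ := hφs.tendsto_atTop_zero.bddAbove_range
    have hM' : ∀ m : ℕ, ((m:ℝ)+1)^2 * q^m ≤ M := fun m => hM (Set.mem_range_self m)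
    have hpow : ∀ m : ℕ, (2:ℝ)^(c * ((m:ℝ)+1)) = 2^c * (q^m * (2:ℝ)^(c' * (m:ℝ))) := by
      intro m
      rw [hq_def, ← Real.rpow_natCast ((2:ℝ)^(c-c')) m, ← Real.rpow_mul (by norm_num),
        ← Real.rpow_add two_pos, ← Real.rpow_add two_pos]
      congr 1
      ring
    refine Summable.of_nonneg_of_le (fun m => hD0 (m+1)) (fun m => ?_)
      (hsum.mul_left (κ * 2^s * 2^c * M))
    calc D (m+1) = (κ * 2^s * 2^c) * (((m:ℝ)+1)^2 * q^m) * ((2:ℝ)^(c' * (m:ℝ)) * η m) := by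
          rw [hkey (m+1)]
          simp only [Nat.add_sub_cancel]
          push_cast
          rw [hpow m]
          ring
      _ ≤ κ * 2^s * 2^c * M * ((2:ℝ)^(c' * (m:ℝ)) * η m) := by
          have hx : (0:ℝ) ≤ (2:ℝ)^(c' * (m:ℝ)) * η m :=
            mul_nonneg (Real.rpow_pos_of_pos two_pos _).le (hη m)
          have hy : (0:ℝ) ≤ κ * 2^s * 2^c := by positivity
          exact mul_le_mul_of_nonneg_right (mul_le_mul_of_nonneg_left (hM' m) hy) hx
  set E : ℕ → ℝ≥0∞ := fun j => ENNReal.ofReal (D j) with hE_def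
  have hEsum : ∑' j, E j ≠ ∞ := by
    rw [hE_def, ← ENNReal.ofReal_tsum_of_nonneg hD0 hsumD]
    exact ENNReal.ofReal_ne_top
  set t : ℕ → ℕ × List Bool → Set (AddCircle (1:ℝ)) := fun n p =>
    if p.2 ∈ St ∧ p.2.length = p.1 ∧ n ≤ p.1 then Metric.ball (wordPt p.2) (ρ p.1) else ∅
    with ht_def
  set r : ℕ → ℝ≥0∞ := fun n => 2 * ENNReal.ofReal (ρ n) with hr_def
  have hρ_mono : ∀ {n j : ℕ}, n ≤ j → ρ j ≤ ρ n := by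
    intro n j hnj
    apply Real.rpow_le_rpow_of_exponent_le one_le_two
    have hcast : (n:ℝ) ≤ (j:ℝ) := Nat.cast_le.2 hnj
    have h1 : -(hlo * (j:ℝ)) ≤ -(hlo * (n:ℝ)) := by nlinarith
    gcongr
  have hρ_tendsto : Tendsto ρ atTop (𝓝 0) := by
    have hfe : ρ = fun n : ℕ => ((2:ℝ)^(-hlo/α))^n := by
      funext n
      simp only [hρ_def]
      rw [← Real.rpow_natCast ((2:ℝ)^(-hlo/α)) n, ← Real.rpow_mul (by norm_num)]
      congr 1
      ring
    rw [hfe]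
    apply tendsto_pow_atTop_nhds_zero_of_lt_one (Real.rpow_pos_of_pos two_pos _).le
    exact Real.rpow_lt_one_of_one_lt_of_neg one_lt_two
      (div_neg_of_neg_of_pos (by linarith) hα0)
  have hr_tendsto : Tendsto r atTop (𝓝 0) := by
    have h1 : Tendsto (fun n => ENNReal.ofReal (ρ n)) atTop (𝓝 0) := by
      have := (ENNReal.continuous_ofReal.tendsto 0).comp hρ_tendsto
      simpa [Function.comp_def] using this
    have h2 := ENNReal.Tendsto.const_mul (a := 2) h1 (Or.inr (by simp))
    simpa [hr_def] using h2
  have ht_diam : ∀ n, ∀ p : ℕ × List Bool, EMetric.diam (t n p) ≤ r n := by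
    intro n p
    simp only [ht_def]
    split_ifs with hcond
    · obtain ⟨-, -, hnp⟩ := hcond
      calc EMetric.diam (Metric.ball (wordPt p.2) (ρ p.1))
          ≤ 2 * ENNReal.ofReal (ρ p.1) := by
            rw [← Metric.emetric_ball]; exact EMetric.diam_ball
        _ ≤ r n := by
            rw [hr_def]
            exact mul_le_mul_right (ENNReal.ofReal_le_ofReal (hρ_mono hnp)) 2
    · simp [EMetric.diam]
  have ht_cover : ∀ n, bigL hlo St α ⊆ ⋃ p : ℕ × List Bool, t n p := by
    intro n x hx
    have hxI : {u : List Bool | u ∈ St ∧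
        dist x (wordPt u) < (2:ℝ) ^ (-(hlo * u.length) / α)}.Infinite := hx
    have hfin : {u : List Bool | u.length ≤ n}.Finite := List.finite_length_le Bool n
    obtain ⟨u, ⟨⟨huSt, hud⟩, hul⟩⟩ := (hxI.diff hfin).nonempty
    have hlen : n ≤ u.length := le_of_lt (not_le.1 hul)
    refine Set.mem_iUnion.2 ⟨(u.length, u), ?_⟩
    simp only [ht_def]
    split_ifs with hcnd
    · exact Metric.mem_ball.2 hud
    · exact absurd ⟨huSt, by simp, hlen⟩ hcnd
  have hmain := Measure.hausdorffMeasure_le_liminf_tsum s (bigL hlo St α) r hr_tendsto t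
    (Eventually.of_forall ht_diam) (Eventually.of_forall ht_cover)
  have htail : ∀ n : ℕ, 1 ≤ n →
      (∑' p : ℕ × List Bool, EMetric.diam (t n p) ^ s) ≤ ∑' k, E (k + n) := by
    intro n hn1
    rw [ENNReal.tsum_prod']
    have hstep : ∀ j : ℕ, (∑' u : List Bool, EMetric.diam (t n (j, u)) ^ s)
        ≤ if n ≤ j then E j else 0 := by
      intro j
      by_cases hnj : n ≤ j
      · rw [if_pos hnj]
        obtain ⟨hfin, hbound⟩ := hcard j (hn1.trans hnj)
        have hzero : ∀ u ∉ hfin.toFinset, EMetric.diam (t n (j, u)) ^ s = 0 := by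
          intro u hu
          rw [Set.Finite.mem_toFinset] at hu
          have he : t n (j, u) = ∅ := by
            simp only [ht_def]
            exact if_neg fun ⟨h1, h2, _⟩ => hu ⟨h1, h2⟩
          rw [he]
          simp [EMetric.diam, ENNReal.zero_rpow_of_pos hs]
        rw [tsum_eq_sum hzero]
        have hterm : ∀ u ∈ hfin.toFinset,
            EMetric.diam (t n (j, u)) ^ s ≤ ENNReal.ofReal ((2 * ρ j) ^ s) := by
          intro u _
          simp only [ht_def]
          split_ifs with hcond
          · calc EMetric.diam (Metric.ball (wordPt u) (ρ j)) ^ s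
                ≤ (2 * ENNReal.ofReal (ρ j)) ^ s := by
                  apply ENNReal.rpow_le_rpow _ hs.le
                  rw [← Metric.emetric_ball]; exact EMetric.diam_ball
              _ = ENNReal.ofReal ((2 * ρ j) ^ s) := by
                  rw [show (2:ℝ≥0∞) = ENNReal.ofReal 2 by simp,
                    ← ENNReal.ofReal_mul (by norm_num),
                    ← ENNReal.ofReal_rpow_of_nonneg (by positivity) hs.le]
          · simp [EMetric.diam, ENNReal.zero_rpow_of_pos hs]
        calc ∑ u ∈ hfin.toFinset, EMetric.diam (t n (j, u)) ^ s
            ≤ ∑ _u ∈ hfin.toFinset, ENNReal.ofReal ((2 * ρ j) ^ s) :=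
              Finset.sum_le_sum hterm
          _ = (hfin.toFinset.card : ℝ≥0∞) * ENNReal.ofReal ((2 * ρ j) ^ s) := by
              rw [Finset.sum_const, nsmul_eq_mul]
          _ ≤ ENNReal.ofReal (κ * 2 ^ j * η (j-1) * (j:ℝ)^2) * ENNReal.ofReal ((2 * ρ j) ^ s) := by
              apply mul_le_mul_left
              rw [← ENNReal.ofReal_natCast]
              apply ENNReal.ofReal_le_ofReal
              rw [← Set.ncard_eq_toFinset_card _ hfin]
              exact hbound
          _ = E j := by
              have hx := hη (j-1)
              rw [← ENNReal.ofReal_mul (by positivity)]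
      · rw [if_neg hnj]
        have hz : ∀ u : List Bool, EMetric.diam (t n (j, u)) ^ s = 0 := by
          intro u
          have he : t n (j, u) = ∅ := by
            simp only [ht_def]
            exact if_neg fun ⟨_, _, h3⟩ => hnj h3
          rw [he]; simp [EMetric.diam, ENNReal.zero_rpow_of_pos hs]
        simp [hz]
    calc (∑' j, ∑' u : List Bool, EMetric.diam (t n (j, u)) ^ s)
        ≤ ∑' j, (if n ≤ j then E j else 0) := ENNReal.tsum_le_tsum hstep
      _ = ∑' k, E (k + n) := by
          have hinj : Function.Injective (fun k : ℕ => k + n) := add_left_injective n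
          have hsupp : Function.support (fun j : ℕ => if n ≤ j then E j else 0)
              ⊆ Set.range (fun k : ℕ => k + n) := by
            intro x hx
            rcases le_or_gt n x with hc | hc
            · exact ⟨x - n, by simp; omega⟩
            · exact absurd (if_neg (by omega)) hx
          rw [← hinj.tsum_eq hsupp]
          exact tsum_congr fun k => if_pos (Nat.le_add_left n k)
  have hlim : liminf (fun n => ∑' p : ℕ × List Bool, EMetric.diam (t n p) ^ s) atTop
      ≤ (0:ℝ≥0∞) := by
    have h1 : liminf (fun n => ∑' p : ℕ × List Bool, EMetric.diam (t n p) ^ s) atTop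
        ≤ liminf (fun n => ∑' k, E (k + n)) atTop :=
      liminf_le_liminf (eventually_atTop.2 ⟨1, htail⟩)
    rwa [(ENNReal.tendsto_sum_nat_add E hEsum).liminf_eq] at h1
  exact le_zero_iff.1 (hmain.trans hlim)

/-- if `#(S̃ ∩ {0,1}^j) ≤ κ̃ 2^j η_{j−1} j²` and
`h̃ = inf{h > 0 : Σ_j 2^{(1−h̲/h)j} η_j = ∞}`, then for `α > h̲` and every
`s > α/h̃` with `α < s h̃`, the `s`-dimensional Hausdorff measure of `L̃_α`
vanishes; consequently `dim_H L̃_α ≤ α/h̃`. -/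
theorem stmt6 (hlo : ℝ) (h0 : 0 < hlo) (η : ℕ → ℝ) (hη : ∀ j, 0 ≤ η j) (hη1 : ∀ j, η j ≤ 1)
    (κ : ℝ) (hκ : 1 ≤ κ) (St : Set (List Bool))
    (hcard : ∀ j : ℕ, 1 ≤ j → {u ∈ St | u.length = j}.Finite ∧
      ({u ∈ St | u.length = j}.ncard : ℝ) ≤ κ * 2 ^ j * η (j - 1) * (j : ℝ) ^ 2)
    (htil : ℝ)
    (hhtil : htil =
      sInf {h : ℝ | 0 < h ∧ ¬ Summable fun j : ℕ => (2:ℝ) ^ ((1 - hlo / h) * j) * η j})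
    (α : ℝ) (hα : hlo < α) :
    (∀ s : ℝ, α / htil < s → α < s * htil → μH[s] (bigL hlo St α) = 0) ∧
      dimH (bigL hlo St α) ≤ ENNReal.ofReal (α / htil) := by
  have hα0 : 0 < α := h0.trans hα
  set S := {h : ℝ | 0 < h ∧ ¬ Summable fun j : ℕ => (2:ℝ) ^ ((1 - hlo / h) * j) * η j}
    with hS_def
  have hSsub : ∀ x ∈ S, hlo ≤ x := by
    intro x hx
    by_contra hlt
    push_neg at hlt
    exact hx.2 (aux_summable_of_lt hlo h0 hx.1 hlt η hη hη1)
  rcases Set.eq_empty_or_nonempty S with hSe | hSne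
  · -- S empty : htil = 0, and every h > 0 is summable
    have htil0 : htil = 0 := by rw [hhtil, hSe]; exact Real.sInf_empty
    have hsummAll : ∀ h : ℝ, 0 < h →
        Summable fun j : ℕ => (2:ℝ) ^ ((1 - hlo / h) * j) * η j := by
      intro h hh
      by_contra hns
      have : h ∈ S := ⟨hh, hns⟩
      rw [hSe] at this
      exact this
    constructor
    · intro s _ hs2
      rw [htil0, mul_zero] at hs2
      linarith
    · rw [htil0, div_zero, ENNReal.ofReal_zero]
      apply le_of_eq
      rw [← le_zero_iff]
      apply dimH_le
      intro d hd
      rcases eq_or_lt_of_le (zero_le : (0:NNReal) ≤ d) with hd0 | hd0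
      · simp [← hd0]
      · exfalso
        have hdpos : (0:ℝ) < (d:ℝ) := hd0
        have hcore := aux_core hlo h0 η hη κ hκ St hcard α hα (d:ℝ) hdpos
          (α / (d:ℝ) + 1) (lt_add_one _)
          (hsummAll _ (by positivity))
        rw [hcore] at hd
        exact ENNReal.zero_ne_top hd
  · -- S nonempty : hlo ≤ htil
    have hbdd : BddBelow S := ⟨hlo, hSsub⟩
    have htil_ge : hlo ≤ htil := by rw [hhtil]; exact le_csInf hSne hSsub
    have htil_pos : 0 < htil := lt_of_lt_of_le h0 htil_ge
    have main : ∀ s : ℝ, α / htil < s → μH[s] (bigL hlo St α) = 0 := by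
      intro s hs1
      have hspos : 0 < s := lt_of_le_of_lt (div_nonneg hα0.le htil_pos.le) hs1
      have hαs : α / s < htil := by
        rw [div_lt_iff₀ hspos]
        rw [div_lt_iff₀ htil_pos] at hs1
        linarith
      obtain ⟨h, hh1, hh2⟩ := exists_between hαs
      have hhpos : 0 < h := lt_trans (div_pos hα0 hspos) hh1
      have hnotmem : h ∉ S := fun hmem => absurd (by rw [hhtil]; exact csInf_le hbdd hmem) (not_le.2 hh2)
      have hsumm : Summable fun j : ℕ => (2:ℝ) ^ ((1 - hlo / h) * j) * η j := by
        by_contra hn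
        exact hnotmem ⟨hhpos, hn⟩
      exact aux_core hlo h0 η hη κ hκ St hcard α hα s hspos h hh1 hsumm
    refine ⟨fun s hs1 _ => main s hs1, ?_⟩
    apply dimH_le
    intro d hd
    by_contra hgt
    push_neg at hgt
    have hlt : α / htil < (d:ℝ) := by
      have h1 : 0 ≤ α / htil := div_nonneg hα0.le htil_pos.le
      rw [← ENNReal.ofReal_coe_nnreal] at hgt
      exact (ENNReal.ofReal_lt_ofReal_iff_of_nonneg h1).1 hgt
    rw [main (d:ℝ) hlt] at hd
    exact ENNReal.zero_ne_top hd
end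

section
/- Decomposition lemma: for every α > h̲, L_α = L̃_α ∪ Θ, where L_α uses all state-1 vertices S = {u : X_u = 1}, L̃_α uses only 'newly appearing' vertices S̃ = {u : X_u = 1, X_{π(u)} = 0}, and Θ is the set of torus points obtained as limits along infinite state-1 branches. In particular, any point of L_α not in L̃_α lies in Θ. -/
def tauTree (X : List Bool → Bool) (u : List Bool) : Set (List Bool) :=
  {v | u <+: v ∧ ∀ j : ℕ, u.length ≤ j → j ≤ v.length → X (v.take j) = true}

def treeBoundary (X : List Bool → Bool) (u : List Bool) : Set (ℕ → Bool) :=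
  {ζ | ∀ j : ℕ, u.length ≤ j → (List.ofFn fun i : Fin j => ζ i) ∈ tauTree X u}

noncomputable def seqVal (ζ : ℕ → Bool) : ℝ :=
  ∑' j : ℕ, if ζ j then (2:ℝ) ^ (-(j:ℤ) - 1) else 0

noncomputable def ThetaDot (X : List Bool → Bool) : Set ℝ :=
  ⋃ u : List Bool, ⋃ ζ ∈ treeBoundary X u, {seqVal ζ}

/-- `Θ = φ(Θ̇) ⊆ 𝕋`. -/
noncomputable def ThetaSet (X : List Bool → Bool) : Set (AddCircle (1:ℝ)) :=
  (fun r : ℝ => ((r : ℝ) : AddCircle (1:ℝ))) '' ThetaDot X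

/-!
Put `q = 2^(-h̲/α)`, so `1/2 < q < 1` and `x ∈ L_α` means that infinitely many state-1 words `u`
satisfy `d(x, x_u) < q^|u|`. The prefix of `u` of length `j` lies within `2^(-j)` of `x_u`, and
`2^(-j)` is eventually negligible against `q^j - q^(j+1)`, so deep prefixes of approximating words
approximate `x` as well. If `x ∉ L̃_α`, newly appearing approximants have bounded length, hence all
deep prefixes of approximants are in state 1. Compactness of `{0,1}^ℕ` produces a branch all of
whose prefixes are prefixes of approximants: it is eventually in state 1 and converges to `x`.
Conversely, the prefixes of a branch approximate its limit at rate `2^(-j) < q^j`.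
-/

open Filter Topology

noncomputable def binDigit (b : Bool) (k : ℕ) : ℝ := if b then (2:ℝ) ^ (-(k:ℤ) - 1) else 0

lemma two_zpow_neg_sub_one (k : ℕ) : (2:ℝ) ^ (-(k:ℤ) - 1) = 2⁻¹ ^ (k + 1) := by
  rw [show -(k:ℤ) - 1 = -((k + 1 : ℕ) : ℤ) by push_cast; ring, zpow_neg, zpow_natCast, inv_pow]

lemma binDigit_nonneg (b : Bool) (k : ℕ) : 0 ≤ binDigit b k := by
  unfold binDigit; split <;> positivity

lemma binDigit_le (b : Bool) (k : ℕ) : binDigit b k ≤ 2⁻¹ ^ (k + 1) := by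
  unfold binDigit; split
  · exact (two_zpow_neg_sub_one k).le
  · positivity

lemma summable_binDigit (ζ : ℕ → Bool) : Summable fun k => binDigit (ζ k) k :=
  .of_nonneg_of_le (fun k => binDigit_nonneg _ k) (fun k => binDigit_le _ k)
    ((summable_geometric_two.mul_left 2⁻¹).congr fun k => by rw [pow_succ', one_div, inv_pow])

lemma abs_binDigit_sub_le (b c : Bool) (k : ℕ) :
    |binDigit b k - binDigit c k| ≤ 2⁻¹ ^ (k + 1) :=
  abs_sub_le_of_nonneg_of_le (binDigit_nonneg b k) (binDigit_le b k)
    (binDigit_nonneg c k) (binDigit_le c k)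

lemma seqVal_eq (ζ : ℕ → Bool) : seqVal ζ = ∑' k, binDigit (ζ k) k := rfl

lemma abs_seqVal_sub_le {ζ ξ : ℕ → Bool} {j : ℕ} (h : ∀ i < j, ζ i = ξ i) :
    |seqVal ζ - seqVal ξ| ≤ 2⁻¹ ^ j := by
  have hsum := (summable_binDigit ζ).sub (summable_binDigit ξ)
  have hhead : ∑ i ∈ Finset.range j, (binDigit (ζ i) i - binDigit (ξ i) i) = 0 :=
    Finset.sum_eq_zero fun i hi => by rw [h i (Finset.mem_range.1 hi), sub_self]
  rw [seqVal_eq, seqVal_eq, ← (summable_binDigit ζ).tsum_sub (summable_binDigit ξ),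
    ← hsum.sum_add_tsum_nat_add j, hhead, zero_add, ← Real.norm_eq_abs]
  refine tsum_of_norm_bounded (hasSum_geometric_two' ((2:ℝ)⁻¹ ^ j)) fun k => ?_
  calc ‖binDigit (ζ (k + j)) (k + j) - binDigit (ξ (k + j)) (k + j)‖ ≤ 2⁻¹ ^ (k + j + 1) :=
        abs_binDigit_sub_le _ _ _
    _ = 2⁻¹ ^ j / 2 / 2 ^ k := by rw [pow_succ, pow_add, inv_pow 2 k]; field_simp

lemma wordVal_eq_seqVal (u : List Bool) : wordVal u = seqVal fun k => u.getD k false :=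
  (tsum_eq_sum fun k hk => by
    rw [List.getD_eq_default _ _ (by simpa using hk)]; rfl).symm

lemma dist_coe_le_abs {p : ℝ} (a b : ℝ) : dist (a : AddCircle p) b ≤ |a - b| := by
  rw [dist_eq_norm, ← QuotientAddGroup.mk_sub]
  exact QuotientAddGroup.norm_mk_le_norm

def seqPrefix (ζ : ℕ → Bool) (j : ℕ) : List Bool := List.ofFn fun i : Fin j => ζ i

@[simp]
lemma length_seqPrefix (ζ : ℕ → Bool) (j : ℕ) : (seqPrefix ζ j).length = j :=
  List.length_ofFn

lemma getD_seqPrefix {ζ : ℕ → Bool} {i j : ℕ} (h : i < j) :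
    (seqPrefix ζ j).getD i false = ζ i := by
  simp [seqPrefix, List.getD_eq_getElem?_getD, h]

lemma take_seqPrefix (ζ : ℕ → Bool) {i j : ℕ} (h : i ≤ j) :
    (seqPrefix ζ j).take i = seqPrefix ζ i :=
  List.ext_getElem (by simp [h]) fun k _ _ => by simp [seqPrefix]

lemma take_eq_seqPrefix {u : List Bool} {ζ : ℕ → Bool} {j : ℕ} (hj : j ≤ u.length)
    (h : ∀ i < j, u.getD i false = ζ i) : u.take j = seqPrefix ζ j :=
  List.ext_getElem (by simp [hj]) fun i hi _ => by
    rw [List.getElem_take, ← List.getD_eq_getElem _ false, h i (by simp at hi; omega)]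
    simp [seqPrefix]

lemma dist_wordPt_take_le (u : List Bool) (j : ℕ) :
    dist (wordPt u) (wordPt (u.take j)) ≤ 2⁻¹ ^ j := by
  refine (dist_coe_le_abs _ _).trans ?_
  rw [wordVal_eq_seqVal, wordVal_eq_seqVal]
  exact abs_seqVal_sub_le fun i hi => by
    simp [List.getD_eq_getElem?_getD, hi]

lemma dist_seqVal_wordPt_seqPrefix_le (ζ : ℕ → Bool) (j : ℕ) :
    dist (seqVal ζ : AddCircle (1:ℝ)) (wordPt (seqPrefix ζ j)) ≤ 2⁻¹ ^ j := by
  refine (dist_coe_le_abs _ _).trans ?_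
  rw [wordVal_eq_seqVal]
  exact abs_seqVal_sub_le fun i hi => (getD_seqPrefix hi).symm

lemma mem_treeBoundary_iff {X : List Bool → Bool} {u : List Bool} {ζ : ℕ → Bool} :
    ζ ∈ treeBoundary X u ↔ ∀ j, u.length ≤ j → u <+: seqPrefix ζ j ∧
      ∀ i, u.length ≤ i → i ≤ j → X ((seqPrefix ζ j).take i) = true := by
  simp [treeBoundary, tauTree, seqPrefix]

lemma thetaDot_eq (X : List Bool → Bool) :
    ThetaDot X = seqVal '' {ζ | ∀ᶠ j in atTop, X (seqPrefix ζ j) = true} := by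
  ext r
  simp only [ThetaDot, Set.mem_iUnion, Set.mem_singleton_iff, Set.mem_image, Set.mem_ofPred_eq,
    eventually_atTop, exists_prop, mem_treeBoundary_iff]
  constructor
  · rintro ⟨u, ζ, hζ, rfl⟩
    refine ⟨ζ, ⟨u.length, fun j hj => ?_⟩, rfl⟩
    simpa [take_seqPrefix] using (hζ j hj).2 j hj le_rfl
  · rintro ⟨ζ, ⟨N, hN⟩, rfl⟩
    refine ⟨seqPrefix ζ N, ζ, fun j hj => ?_, rfl⟩
    rw [length_seqPrefix] at hj
    refine ⟨take_seqPrefix ζ hj ▸ List.take_prefix N (seqPrefix ζ j), fun i hi hij => ?_⟩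
    rw [take_seqPrefix ζ hij]
    exact hN i (by simpa using hi)

def approxWords (q : ℝ) (S : Set (List Bool)) (x : AddCircle (1:ℝ)) : Set (List Bool) :=
  {u | u ∈ S ∧ dist x (wordPt u) < q ^ u.length}

def newWords (X : List Bool → Bool) : Set (List Bool) :=
  {u | u ≠ [] ∧ X u = true ∧ X u.dropLast = false}

lemma bigL_eq (hlo α : ℝ) (S : Set (List Bool)) :
    bigL hlo S α = {x | (approxWords ((2:ℝ) ^ (-(hlo / α))) S x).Infinite} := by
  have hpow (n : ℕ) : (2:ℝ) ^ (-(hlo * n) / α) = ((2:ℝ) ^ (-(hlo / α))) ^ n := by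
    rw [← Real.rpow_natCast, ← Real.rpow_mul zero_le_two]
    ring_nf
  simp only [bigL, approxWords, hpow]

lemma eventually_pow_succ_add_le {q : ℝ} (h2q : 2⁻¹ < q) (hq1 : q < 1) :
    ∀ᶠ j in atTop, q ^ (j + 1) + 2⁻¹ ^ j ≤ q ^ j := by
  have hq0 : 0 < q := (by norm_num : (0:ℝ) < 2⁻¹).trans h2q
  have hr : (2 * q)⁻¹ < 1 := inv_lt_one_of_one_lt₀ (by linarith)
  filter_upwards [(tendsto_pow_atTop_nhds_zero_of_lt_one (by positivity) hr).eventually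
    (gt_mem_nhds (sub_pos.2 hq1))] with j hj
  have hsplit : (2:ℝ)⁻¹ ^ j = q ^ j * (2 * q)⁻¹ ^ j := by
    rw [← mul_pow, mul_inv, mul_left_comm, mul_inv_cancel₀ hq0.ne', mul_one]
  rw [hsplit, pow_succ]
  nlinarith [pow_pos hq0 j]

lemma dist_wordPt_take_lt {q : ℝ} {x : AddCircle (1:ℝ)} {u : List Bool} {j : ℕ}
    (hq0 : 0 ≤ q) (hq1 : q ≤ 1) (hstep : q ^ (j + 1) + 2⁻¹ ^ j ≤ q ^ j)
    (hu : dist x (wordPt u) < q ^ u.length) (hj : j ≤ u.length) :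
    dist x (wordPt (u.take j)) < q ^ j := by
  rcases hj.eq_or_lt with rfl | hlt
  · simpa using hu
  calc dist x (wordPt (u.take j))
      ≤ dist x (wordPt u) + dist (wordPt u) (wordPt (u.take j)) := dist_triangle _ _ _
    _ < q ^ (j + 1) + 2⁻¹ ^ j :=
        add_lt_add_of_lt_of_le (hu.trans_le (pow_le_pow_of_le_one hq0 hq1 hlt))
          (dist_wordPt_take_le u j)
    _ ≤ q ^ j := hstep

/-- If the ancestor `u.take j` (`j ≥ N`) were in state 0, its child `u.take (j + 1)` would be a
newly appearing word of length `> N` approximating `x`. -/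
lemma take_stateOne_of_mem_approxWords {X : List Bool → Bool} {q : ℝ} {x : AddCircle (1:ℝ)}
    {N : ℕ} (hq0 : 0 ≤ q) (hq1 : q ≤ 1) (hstep : ∀ j ≥ N, q ^ (j + 1) + 2⁻¹ ^ j ≤ q ^ j)
    (hnew : ∀ v ∈ approxWords q (newWords X) x, v.length ≤ N) :
    ∀ u ∈ approxWords q {v | X v = true} x, ∀ j, N ≤ j → j ≤ u.length → X (u.take j) = true := by
  intro u hu j hNj hj
  induction hj using Nat.decreasingInduction with
  | self => simpa using hu.1
  | of_succ j hj ih =>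
    by_contra hX
    have hmem : u.take (j + 1) ∈ approxWords q (newWords X) x := by
      refine ⟨⟨List.ne_nil_of_length_pos (by simp; omega), ih (by omega), ?_⟩, ?_⟩
      · rw [List.dropLast_eq_take, List.take_take, List.length_take_of_le hj]
        simpa using hX
      · rw [List.length_take_of_le hj]
        exact dist_wordPt_take_lt hq0 hq1 (hstep _ (by omega)) hu.2 hj
    have := hnew _ hmem
    rw [List.length_take_of_le hj] at this
    omega

lemma exists_seq_take_eq_seqPrefix {A : Set (List Bool)} (hA : A.Infinite) :
    ∃ ζ : ℕ → Bool, ∀ j, ∃ u ∈ A, j ≤ u.length ∧ u.take j = seqPrefix ζ j := by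
  have := hA.cofinite_inf_principal_neBot
  obtain ⟨ζ, hζ⟩ := exists_clusterPt_of_compactSpace
    (map (fun u : List Bool => fun i => u.getD i false) (cofinite ⊓ 𝓟 A))
  refine ⟨ζ, fun j => ?_⟩
  have hnhds : ∀ᶠ ξ in 𝓝 ζ, ∀ i < j, ξ i = ζ i :=
    (eventually_all_finite (Set.finite_lt_nat j)).2 fun i _ =>
      (continuous_apply i).continuousAt.eventually_mem ((isOpen_discrete {ζ i}).mem_nhds rfl)
  have hlong : ∀ᶠ u in cofinite ⊓ 𝓟 A, u ∈ A ∧ j ≤ u.length := by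
    have hcof : ∀ᶠ u : List Bool in cofinite, j ≤ u.length :=
      eventually_cofinite.2 <| (List.finite_length_le Bool j).subset fun _ hu => (not_le.1 hu).le
    exact eventually_inf_principal.2 (hcof.mono fun u hj hu => ⟨hu, hj⟩)
  obtain ⟨u, ⟨huA, hju⟩, hagree⟩ :=
    (hlong.and_frequently (mapClusterPt_iff_frequently.1 hζ _ hnhds)).exists
  exact ⟨u, huA, hju, take_eq_seqPrefix hju hagree⟩

lemma coe_seqVal_eq_of_forall_exists {q : ℝ} {x : AddCircle (1:ℝ)} {ζ : ℕ → Bool}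
    (h2q : 2⁻¹ ≤ q) (hq1 : q < 1)
    (h : ∀ j, ∃ u, dist x (wordPt u) < q ^ u.length ∧ j ≤ u.length ∧ u.take j = seqPrefix ζ j) :
    (seqVal ζ : AddCircle (1:ℝ)) = x := by
  have hq0 : 0 ≤ q := le_trans (by norm_num) h2q
  have hbound (j : ℕ) : dist x (seqVal ζ) ≤ 3 * q ^ j := by
    obtain ⟨u, hu, hj, htake⟩ := h j
    have h2 : (2:ℝ)⁻¹ ^ j ≤ q ^ j := pow_le_pow_left₀ (by norm_num) h2q j
    calc dist x (seqVal ζ)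
        ≤ dist x (wordPt u) + dist (wordPt u) (wordPt (u.take j)) +
            dist (wordPt (seqPrefix ζ j)) (seqVal ζ) := by
          rw [htake]; exact dist_triangle4 _ _ _ _
      _ ≤ q ^ j + 2⁻¹ ^ j + 2⁻¹ ^ j := by
          gcongr
          · exact hu.le.trans (pow_le_pow_of_le_one hq0 hq1.le hj)
          · exact dist_wordPt_take_le u j
          · rw [dist_comm]; exact dist_seqVal_wordPt_seqPrefix_le ζ j
      _ ≤ 3 * q ^ j := by linarith
  have hlim : Tendsto (fun j : ℕ => 3 * q ^ j) atTop (𝓝 0) := by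
    simpa using (tendsto_pow_atTop_nhds_zero_of_lt_one hq0 hq1).const_mul 3
  exact (dist_le_zero.1 (ge_of_tendsto' hlim hbound)).symm

lemma mem_thetaSet_of_infinite_of_finite {X : List Bool → Bool} {q : ℝ} {x : AddCircle (1:ℝ)}
    (h2q : 2⁻¹ < q) (hq1 : q < 1) (hall : (approxWords q {u | X u = true} x).Infinite)
    (hnew : (approxWords q (newWords X) x).Finite) : x ∈ ThetaSet X := by
  have hq0 : 0 ≤ q := le_trans (by norm_num) h2q.le
  obtain ⟨M, hM⟩ := (hnew.image List.length).bddAbove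
  obtain ⟨R, hR⟩ := eventually_atTop.1 (eventually_pow_succ_add_le h2q hq1)
  have hstate := take_stateOne_of_mem_approxWords (N := max M R) hq0 hq1.le
    (fun j hj => hR j (le_of_max_le_right hj))
    (fun v hv => (hM (Set.mem_image_of_mem _ hv)).trans (le_max_left M R))
  obtain ⟨ζ, hζ⟩ := exists_seq_take_eq_seqPrefix hall
  refine ⟨seqVal ζ, ?_, coe_seqVal_eq_of_forall_exists h2q.le hq1 fun j => ?_⟩
  · rw [thetaDot_eq]
    refine ⟨ζ, eventually_atTop.2 ⟨max M R, fun j hj => ?_⟩, rfl⟩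
    obtain ⟨u, hu, hju, htake⟩ := hζ j
    exact htake ▸ hstate u hu j hj hju
  · obtain ⟨u, hu, hju, htake⟩ := hζ j
    exact ⟨u, hu.2, hju, htake⟩

lemma infinite_approxWords_of_mem_thetaSet {X : List Bool → Bool} {q : ℝ} {x : AddCircle (1:ℝ)}
    (h2q : 2⁻¹ < q) (hx : x ∈ ThetaSet X) : (approxWords q {u | X u = true} x).Infinite := by
  obtain ⟨_, hr, rfl⟩ := hx
  rw [thetaDot_eq] at hr
  obtain ⟨ζ, hζ, rfl⟩ := hr
  obtain ⟨N, hN⟩ := eventually_atTop.1 hζ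
  refine Set.infinite_of_injective_forall_mem (f := fun n => seqPrefix ζ (n + N + 1))
    (fun m n h => by simpa using congrArg List.length h) fun n => ⟨hN _ (by omega), ?_⟩
  rw [length_seqPrefix]
  exact (dist_seqVal_wordPt_seqPrefix_le ζ _).trans_lt
    (pow_lt_pow_left₀ h2q (by norm_num) (by omega))

theorem infinite_approxWords_iff {X : List Bool → Bool} {q : ℝ} {x : AddCircle (1:ℝ)}
    (h2q : 2⁻¹ < q) (hq1 : q < 1) :
    (approxWords q {u | X u = true} x).Infinite ↔
      (approxWords q (newWords X) x).Infinite ∨ x ∈ ThetaSet X := by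
  refine ⟨fun h => or_iff_not_imp_left.2 fun hnew =>
    mem_thetaSet_of_infinite_of_finite h2q hq1 h (Set.not_infinite.1 hnew), ?_⟩
  rintro (hnew | hΘ)
  · exact hnew.mono fun u hu => ⟨hu.1.2.1, hu.2⟩
  · exact infinite_approxWords_of_mem_thetaSet h2q hΘ

/-- decomposition lemma: for every `α > h̲`,
`L_α = L̃_α ∪ Θ`, where `L_α` uses all state-1 vertices `S = {u : X_u = 1}` and
`L̃_α` only the newly appearing ones `S̃ = {u ≠ ∅ : X_u = 1, X_{π(u)} = 0}`.
In particular `L_α \ L̃_α ⊆ Θ`. -/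
theorem stmt14 (hlo : ℝ) (h0 : 0 < hlo) (X : List Bool → Bool) :
    ∀ α : ℝ, hlo < α →
      bigL hlo {u : List Bool | X u = true} α =
        bigL hlo {u : List Bool | u ≠ [] ∧ X u = true ∧ X u.dropLast = false} α ∪
          ThetaSet X := by
  intro α hα
  have hα0 : 0 < α := h0.trans hα
  have h2q : (2:ℝ)⁻¹ < 2 ^ (-(hlo / α)) := by
    rw [← Real.rpow_neg_one]
    exact Real.rpow_lt_rpow_of_exponent_lt one_lt_two (by
      rw [neg_lt_neg_iff]; exact (div_lt_one hα0).2 hα)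
  have hq1 : (2:ℝ) ^ (-(hlo / α)) < 1 :=
    Real.rpow_lt_one_of_one_lt_of_neg one_lt_two (neg_neg_of_pos (div_pos h0 hα0))
  ext x
  simp only [bigL_eq, Set.mem_union, Set.mem_ofPred_eq]
  exact infinite_approxWords_iff h2q hq1
end

section
/- Covering lemma for the proof of Lemma 4.2: let α > h̃, h̲ > 0, and let j, j₀ satisfy j − 1 ≥ j₀ ≥ (1 − log₂(2^{h̲/α} − 1))/(1 − h̲/α). If the torus T is not covered by the open balls B(x_u, 2^{−h̲ j(u)/α}) with u ranging over S_{j−1} ∪ S_j, then there exists k ∈ {0, …, 2^j − 1} such that X maps to 0 all vertices u of generation j−1 with d(x_u, k2^{−j}) ≤ 2^{−1−h̲(j−1)/α} and all vertices of generation j with d(x_u, k2^{−j}) ≤ 2^{−1−h̲ j/α}. -/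
noncomputable def dyadicPt (j k : ℕ) : AddCircle (1:ℝ) :=
  (((k : ℝ) / 2 ^ j : ℝ) : AddCircle (1:ℝ))

/-! Round a point `x` missed by all the balls to the nearest dyadic point `k 2⁻ʲ`, at distance
at most `2^(-1-j)`. A vertex `u` with `X u = 1` of generation `L ≤ j` lying within `2^(-1-θ)` of
`k 2⁻ʲ`, where `θ = h̲ L / α < j`, would then have `x` in its ball `B(x_u, 2^(-θ))`, because
`2^(-1-j) + 2^(-1-θ) < 2^(-θ)`. -/

theorem AddCircle.dist_coe_le_abs_sub {p : ℝ} (a b : ℝ) :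
    dist (a : AddCircle p) (b : AddCircle p) ≤ |a - b| := by
  rw [dist_eq_norm, ← QuotientAddGroup.mk_sub]
  exact QuotientAddGroup.norm_mk_le_norm

theorem dyadicPt_eq_toAddCircle (j k : ℕ) :
    dyadicPt j k = ZMod.toAddCircle (k : ZMod (2 ^ j)) := by
  rw [ZMod.toAddCircle_natCast, dyadicPt]
  norm_num

theorem exists_dyadicPt_dist_le (j : ℕ) (x : AddCircle (1:ℝ)) :
    ∃ k < 2 ^ j, dist x (dyadicPt j k) ≤ (2:ℝ) ^ (-1 - (j:ℝ)) := by
  obtain ⟨r, rfl⟩ := QuotientAddGroup.mk_surjective x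
  set m : ℤ := round (r * 2 ^ j)
  refine ⟨(m : ZMod (2 ^ j)).val, ZMod.val_lt _, ?_⟩
  have hpt : dyadicPt j (m : ZMod (2 ^ j)).val = ((m / 2 ^ j : ℝ) : AddCircle (1:ℝ)) := by
    rw [dyadicPt_eq_toAddCircle, ZMod.natCast_zmod_val, ZMod.toAddCircle_intCast]
    norm_num
  have hround : |r * 2 ^ j - m| ≤ 1 / 2 := abs_sub_round _
  calc dist (r : AddCircle (1:ℝ)) (dyadicPt j (m : ZMod (2 ^ j)).val)
      ≤ |r - m / 2 ^ j| := hpt ▸ AddCircle.dist_coe_le_abs_sub _ _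
    _ = |r * 2 ^ j - m| / 2 ^ j := by
      rw [sub_div' (by positivity), abs_div, abs_of_pos (by positivity : (0:ℝ) < 2 ^ j)]
    _ ≤ 1 / 2 / 2 ^ j := by gcongr
    _ = (2:ℝ) ^ (-1 - (j:ℝ)) := by
      rw [Real.rpow_sub two_pos, Real.rpow_neg_one, Real.rpow_natCast]; ring

theorem two_rpow_neg_one_sub_add_lt {s t : ℝ} (h : s < t) :
    (2:ℝ) ^ (-1 - t) + 2 ^ (-1 - s) < 2 ^ (-s) := by
  have hlt : (2:ℝ) ^ (-1 - t) < 2 ^ (-1 - s) := by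
    apply Real.rpow_lt_rpow_of_exponent_lt one_lt_two; linarith
  have hdouble : (2:ℝ) ^ (-s) = 2 ^ (-1 - s) + 2 ^ (-1 - s) := by
    rw [← two_mul, Real.rpow_sub two_pos, Real.rpow_neg zero_le_two, Real.rpow_neg_one]; ring
  linarith

theorem stmt17_general (hlo α : ℝ) (h0 : 0 < hlo) (hα : hlo < α)
    (X : List Bool → Bool) (j j₀ : ℕ)
    (hjj : j₀ + 1 ≤ j)
    (hnotcov : ¬ ∀ x : AddCircle (1:ℝ), ∃ u : List Bool,
      ((u.length = j - 1 ∨ u.length = j) ∧ X u = true) ∧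
      dist x (wordPt u) < (2:ℝ) ^ (-(hlo * u.length) / α)) :
    ∃ k : ℕ, k < 2 ^ j ∧
      (∀ u : List Bool, u.length = j - 1 →
        dist (wordPt u) (dyadicPt j k) ≤ (2:ℝ) ^ (-1 - hlo * (j - 1 : ℕ) / α) →
        X u = false) ∧
      (∀ u : List Bool, u.length = j →
        dist (wordPt u) (dyadicPt j k) ≤ (2:ℝ) ^ (-1 - hlo * j / α) →
        X u = false) := by
  push Not at hnotcov
  obtain ⟨x, hx⟩ := hnotcov
  obtain ⟨k, hk, hxk⟩ := exists_dyadicPt_dist_le j x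
  have hj : (0:ℝ) < j := by exact_mod_cast (show 0 < j by omega)
  have hfree : ∀ u : List Bool, (u.length = j - 1 ∨ u.length = j) →
      dist (wordPt u) (dyadicPt j k) ≤ (2:ℝ) ^ (-1 - hlo * u.length / α) → X u = false := by
    intro u hgen hd
    by_contra hX
    have hfar := hx u ⟨hgen, by simpa using hX⟩
    have hexp : hlo * u.length / α < j := by
      have hlen : (u.length : ℝ) ≤ j := by exact_mod_cast (show u.length ≤ j by omega)
      rw [div_lt_iff₀ (h0.trans hα)]
      nlinarith
    have hradii := two_rpow_neg_one_sub_add_lt hexp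
    rw [neg_div] at hfar
    linarith [dist_triangle_right x (wordPt u) (dyadicPt j k)]
  exact ⟨k, hk, fun u hu hd ↦ hfree u (.inl hu) (hu ▸ hd),
    fun u hu hd ↦ hfree u (.inr hu) (hu ▸ hd)⟩

/-- covering lemma: let `α > h̲ > 0` and `j − 1 ≥ j₀` with
`j₀ ≥ (1 − log₂(2^{h̲/α} − 1))/(1 − h̲/α)`. If the torus is not covered by the
balls `B(x_u, 2^{−h̲ j(u)/α})`, `u ∈ S_{j−1} ∪ S_j`, then there is
`k ∈ {0,…,2^j − 1}` such that `X` maps to `0` every vertex of generation `j−1`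
within distance `2^{−1−h̲(j−1)/α}` of `k 2^{−j}` and every vertex of generation
`j` within distance `2^{−1−h̲ j/α}` of `k 2^{−j}`. -/
theorem stmt17 (hlo α : ℝ) (h0 : 0 < hlo) (hα : hlo < α)
    (X : List Bool → Bool) (j j₀ : ℕ)
    (hjj : j₀ + 1 ≤ j)
    (hj₀ : (1 - Real.logb 2 ((2:ℝ) ^ (hlo / α) - 1)) / (1 - hlo / α) ≤ (j₀ : ℝ))
    (hnotcov : ¬ ∀ x : AddCircle (1:ℝ), ∃ u : List Bool,
      ((u.length = j - 1 ∨ u.length = j) ∧ X u = true) ∧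
      dist x (wordPt u) < (2:ℝ) ^ (-(hlo * u.length) / α)) :
    ∃ k : ℕ, k < 2 ^ j ∧
      (∀ u : List Bool, u.length = j - 1 →
        dist (wordPt u) (dyadicPt j k) ≤ (2:ℝ) ^ (-1 - hlo * (j - 1 : ℕ) / α) →
        X u = false) ∧
      (∀ u : List Bool, u.length = j →
        dist (wordPt u) (dyadicPt j k) ≤ (2:ℝ) ^ (-1 - hlo * j / α) →
        X u = false) :=
  stmt17_general hlo α h0 hα X j j₀ hjj hnotcov
end
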